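/- Under the isomorphism Cl(V ⊕ ℝ^{1,1}) ≅ Mat₂(Cl(V)), the reversal is given by [[a,b],[c,d]] ↦ [[d̄, b̄],[c̄, ā]], where x̄ denotes the Clifford conjugation on Cl(V). -/

import Mathlib

open CliffordAlgebra

noncomputable def negQhat {V : Type*} [AddCommGroup V] [Module ℝ V]
    (Q : QuadraticForm ℝ V) : QuadraticForm ℝ (V × ℝ × ℝ) :=
  QuadraticMap.prod (-Q) (QuadraticMap.prod QuadraticMap.sq (-QuadraticMap.sq))

/-- The Clifford map `j : V ⊕ ℝ^{1,1} → Mat₂(Cl(V))`,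
`j(v + x₋e₋ + x₊e₊) = [[v, x₋-x₊],[x₋+x₊, -v]]` (convention `v² = -Q v`). -/
noncomputable def jmat {V : Type*} [AddCommGroup V] [Module ℝ V]
    (Q : QuadraticForm ℝ V) (x : V × ℝ × ℝ) :
    Matrix (Fin 2) (Fin 2) (CliffordAlgebra (-Q)) :=
  !![ι (-Q) x.1, algebraMap ℝ _ (x.2.1 - x.2.2);
     algebraMap ℝ _ (x.2.1 + x.2.2), -ι (-Q) x.1]

/-!
For a star ring `A`, conjugate-transposing and then conjugating by the swap matrix
`[[0,1],[1,0]]` is an anti-automorphism `τ` of `Mat₂(A)`. For `A = Cl(V)`, whose `star` is the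
Clifford conjugation `x̄ = reverse (involute x)`, it reads `[[a,b],[c,d]] ↦ [[d̄,b̄],[c̄,ā]]`,
and it fixes every generator `j(x)` because `v̄ = -v` for `v ∈ V`. Hence `F ∘ reverse` and
`τ ∘ F` are anti-homomorphisms out of `Cl(V ⊕ ℝ^{1,1})` that agree on generators, so they agree.
-/

open MulOpposite

theorem CliffordAlgebra.op_map_reverse {R M A : Type*} [CommRing R] [AddCommGroup M]
    [Module R M] {Q : QuadraticForm R M} [Semiring A] [Algebra R A]
    (f : CliffordAlgebra Q →ₐ[R] A) (τ : A →ₐ[R] Aᵐᵒᵖ)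
    (hτ : ∀ m, τ (f (ι Q m)) = op (f (ι Q m))) (x : CliffordAlgebra Q) :
    op (f (reverse x)) = τ (f x) := by
  have : (AlgHom.op f).comp reverseOp = τ.comp f := hom_ext <| LinearMap.ext fun m => by
    simp [hτ]
  exact AlgHom.congr_fun this x

namespace Matrix

variable {α : Type*} [Semiring α]

theorem swap_mul_swap : !![0, 1; 1, 0] * !![0, 1; 1, 0] = (1 : Matrix (Fin 2) (Fin 2) α) := by
  simp [one_fin_two]

variable [StarRing α]

def swapConjTranspose (M : Matrix (Fin 2) (Fin 2) α) : Matrix (Fin 2) (Fin 2) α :=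
  !![0, 1; 1, 0] * Mᴴ * !![0, 1; 1, 0]

theorem swapConjTranspose_of (a b c d : α) :
    swapConjTranspose !![a, b; c, d] = !![star d, star b; star c, star a] := by
  ext i j
  fin_cases i <;> fin_cases j <;>
    simp [swapConjTranspose, mul_apply, vecMul, dotProduct, Fin.sum_univ_two]

theorem swapConjTranspose_one : swapConjTranspose (1 : Matrix (Fin 2) (Fin 2) α) = 1 := by
  rw [swapConjTranspose, conjTranspose_one, Matrix.mul_one, swap_mul_swap]

theorem swapConjTranspose_add (M N : Matrix (Fin 2) (Fin 2) α) :
    swapConjTranspose (M + N) = swapConjTranspose M + swapConjTranspose N := by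
  simp only [swapConjTranspose, conjTranspose_add, Matrix.mul_add, Matrix.add_mul]

theorem swapConjTranspose_mul (M N : Matrix (Fin 2) (Fin 2) α) :
    swapConjTranspose (M * N) = swapConjTranspose N * swapConjTranspose M := by
  simp only [swapConjTranspose, conjTranspose_mul, Matrix.mul_assoc]
  rw [← Matrix.mul_assoc !![0, 1; 1, 0] !![0, 1; 1, 0] (Mᴴ * _), swap_mul_swap, Matrix.one_mul]

end Matrix

namespace CliffordAlgebra

variable {R M : Type*} [CommRing R] [AddCommGroup M] [Module R M] {Q : QuadraticForm R M}

def swapConjTransposeOp :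
    Matrix (Fin 2) (Fin 2) (CliffordAlgebra Q) →ₐ[R]
      (Matrix (Fin 2) (Fin 2) (CliffordAlgebra Q))ᵐᵒᵖ where
  toFun A := op A.swapConjTranspose
  map_one' := by rw [Matrix.swapConjTranspose_one, op_one]
  map_mul' A B := by rw [Matrix.swapConjTranspose_mul, op_mul]
  map_zero' := by simp [Matrix.swapConjTranspose]
  map_add' A B := by rw [Matrix.swapConjTranspose_add, op_add]
  commutes' r := by
    simp [Matrix.algebraMap_eq_diagonal, Matrix.diagonal_fin_two, Matrix.swapConjTranspose_of]

end CliffordAlgebra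

theorem swapConjTranspose_jmat {V : Type*} [AddCommGroup V] [Module ℝ V] (Q : QuadraticForm ℝ V)
    (x : V × ℝ × ℝ) : (jmat Q x).swapConjTranspose = jmat Q x := by
  simp [jmat, Matrix.swapConjTranspose_of]

theorem reversal_matrix (V : Type*) [AddCommGroup V] [Module ℝ V]
    (Q : QuadraticForm ℝ V)
    (F : CliffordAlgebra (negQhat Q) ≃ₐ[ℝ] Matrix (Fin 2) (Fin 2) (CliffordAlgebra (-Q)))
    (hF : ∀ x : V × ℝ × ℝ, F (ι (negQhat Q) x) = jmat Q x)
    (a b c d : CliffordAlgebra (-Q)) :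
    F (reverse (F.symm !![a, b; c, d])) =
      !![reverse (involute d), reverse (involute b);
         reverse (involute c), reverse (involute a)] := by
  have hrev := op_map_reverse F.toAlgHom swapConjTransposeOp
    (fun x => by simp [swapConjTransposeOp, hF, swapConjTranspose_jmat]) (F.symm !![a, b; c, d])
  calc F (reverse (F.symm !![a, b; c, d]))
      = unop (swapConjTransposeOp (F (F.symm !![a, b; c, d]))) := congrArg unop hrev
    _ = !![star d, star b; star c, star a] := by
      rw [F.apply_symm_apply]
      exact Matrix.swapConjTranspose_of a b c d
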